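/- Let ℓ(t) = exp(−|t|) and g_σ(μ) = E_{z ∼ N(μ, σ²)}[ℓ(z)]. Then the partial derivative q_σ(μ) := ∂g_σ(μ)/∂σ satisfies the exact formula q_σ(μ) = (1/2)·exp(σ²/2)·σ·[exp(μ)·erfc(σ/√2 + μ/(√2 σ)) + exp(−μ)·erfc(σ/√2 − μ/(√2 σ))] − √(2/π)·exp(−μ²/(2σ²)). -/

import Mathlib

open MeasureTheory ProbabilityTheory Real Set

/-- `g σ μ = E_{z ∼ N(μ, σ²)}[exp(−|z|)]`. -/
noncomputable def gConv (σ μ : ℝ) : ℝ :=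
  ∫ z, Real.exp (-|z|) ∂(gaussianReal μ (σ ^ 2).toNNReal)

/-- The complementary error function `erfc t = (2/√π) ∫_t^∞ exp(−s²) ds`. -/
noncomputable def erfc (t : ℝ) : ℝ :=
  (2 / Real.sqrt π) * ∫ s in Ioi t, Real.exp (-s ^ 2)

/-!
Split the line at `0`. Completing the square, `exp (-z)` against the density of `N(μ, σ²)`
is `exp (σ²/2 - μ)` times the density of `N(μ - σ², σ²)`, whose mass on `(0, ∞)` is an
`erfc` value; the reflection `z ↦ -z` turns the negative half-line into the same computation
with `-μ`.
This gives `g_σ(μ)` in closed form. Differentiating in `σ`, the two Gaussian factors produced by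
`erfc'` both collapse to `exp (-μ² / (2σ²))`, since
`σ²/2 ± μ - (σ/√2 ± μ/(√2 σ))² = -μ² / (2σ²)`.
-/

open Topology

section

variable {E : Type*} [NormedAddCommGroup E] [NormedSpace ℝ E]

theorem integral_comp_add_right_Ioi (g : ℝ → E) (a d : ℝ) :
    ∫ x in Ioi a, g (x + d) = ∫ x in Ioi (a + d), g x := by
  have := (measurePreserving_add_right volume d).setIntegral_preimage_emb
    (measurableEmbedding_addRight d) g (Ioi (a + d))
  rwa [preimage_add_const_Ioi, add_sub_cancel_right] at this

theorem integral_eq_integral_Ioi_add_integral_Ioi_comp_neg {f : ℝ → E} (hf : Integrable f) :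
    ∫ x, f x = (∫ x in Ioi 0, f x) + ∫ x in Ioi 0, f (-x) := by
  rw [integral_comp_neg_Ioi, neg_zero, add_comm,
    intervalIntegral.integral_Iic_add_Ioi hf.integrableOn hf.integrableOn]

theorem hasDerivAt_integral_Ioi [CompleteSpace E] {f : ℝ → E} {t : ℝ} (hf : Integrable f)
    (hft : ContinuousAt f t) :
    HasDerivAt (fun u => ∫ x in Ioi u, f x) (-f t) t := by
  have hsplit :
      (fun u => ∫ x in Ioi u, f x) = fun u => (∫ x in Ioi 0, f x) - ∫ x in 0..u, f x := by
    ext u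
    rw [← intervalIntegral.integral_Ioi_sub_Ioi' hf.integrableOn hf.integrableOn, sub_sub_cancel]
  rw [hsplit]
  exact (intervalIntegral.integral_hasDerivAt_right hf.intervalIntegrable
    hf.aestronglyMeasurable.stronglyMeasurableAtFilter hft).const_sub _

end

theorem hasDerivAt_erfc (t : ℝ) : HasDerivAt erfc (-(2 / √π) * exp (-t ^ 2)) t := by
  have hint : Integrable fun s : ℝ => exp (-s ^ 2) := by
    simpa using integrable_exp_neg_mul_sq one_pos
  exact ((hasDerivAt_integral_Ioi hint (by fun_prop)).const_mul (2 / √π)).congr_deriv (by ring)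

theorem gaussianPDFReal_neg (μ : ℝ) (v : NNReal) (x : ℝ) :
    gaussianPDFReal μ v (-x) = gaussianPDFReal (-μ) v x := by
  simp only [gaussianPDFReal]
  congr 4
  ring

theorem gaussianPDFReal_mul_exp (μ c : ℝ) (v : NNReal) (x : ℝ) :
    gaussianPDFReal μ v x * exp (c * x) =
      exp (c * μ + c ^ 2 * v / 2) * gaussianPDFReal (μ + c * v) v x := by
  rcases eq_or_ne v 0 with rfl | hv
  · simp
  have hv' : (v : ℝ) ≠ 0 := by exact_mod_cast hv
  simp only [gaussianPDFReal]
  rw [mul_left_comm, mul_assoc, ← exp_add, ← exp_add]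
  congr 2
  field_simp
  ring

theorem integral_Ioi_gaussianPDFReal (m a : ℝ) {σ : ℝ} (hσ : 0 < σ) :
    ∫ z in Ioi a, gaussianPDFReal m (σ ^ 2).toNNReal z = erfc ((a - m) / (√2 * σ)) / 2 := by
  have hk : 0 < (√2 * σ)⁻¹ := by positivity
  have hpdf : ∀ z, gaussianPDFReal m (σ ^ 2).toNNReal (z + m) =
      (√π)⁻¹ * (√2 * σ)⁻¹ * exp (-((√2 * σ)⁻¹ * z) ^ 2) := by
    intro z
    rw [gaussianPDFReal, Real.coe_toNNReal _ (sq_nonneg σ), sqrt_mul (by positivity),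
      sqrt_mul (by norm_num), sqrt_sq hσ.le]
    have h2 : √2 ^ 2 = 2 := sq_sqrt (by norm_num)
    congr 2
    · ring
    · field_simp
      rw [h2]
      ring
  nth_rw 1 [← sub_add_cancel a m]
  rw [← integral_comp_add_right_Ioi]
  simp_rw [hpdf, integral_const_mul]
  rw [integral_comp_mul_left_Ioi (fun s => exp (-s ^ 2)) _ hk, smul_eq_mul, erfc]
  field_simp

/-- `gaussianExpTail c σ = 2 ∫_{z > 0} exp (-z) dN(-c, σ²)(z)`. -/
noncomputable def gaussianExpTail (c σ : ℝ) : ℝ :=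
  exp (σ ^ 2 / 2 + c) * erfc (σ / √2 + c / (√2 * σ))

theorem integral_Ioi_gaussianPDFReal_mul_exp_neg (μ : ℝ) {σ : ℝ} (hσ : 0 < σ) :
    ∫ z in Ioi 0, gaussianPDFReal μ (σ ^ 2).toNNReal z * exp (-z) =
      gaussianExpTail (-μ) σ / 2 := by
  have htilt : ∀ z, gaussianPDFReal μ (σ ^ 2).toNNReal z * exp (-z) =
      exp (σ ^ 2 / 2 - μ) * gaussianPDFReal (μ - σ ^ 2) (σ ^ 2).toNNReal z := by
    intro z
    rw [← neg_one_mul z, gaussianPDFReal_mul_exp, Real.coe_toNNReal _ (sq_nonneg σ)]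
    congr 2 <;> ring
  simp_rw [htilt, integral_const_mul, integral_Ioi_gaussianPDFReal _ _ hσ, gaussianExpTail]
  have harg : (0 - (μ - σ ^ 2)) / (√2 * σ) = σ / √2 + -μ / (√2 * σ) := by
    field_simp
    ring
  rw [harg, sub_eq_add_neg]
  ring

theorem gConv_eq_gaussianExpTail (μ : ℝ) {σ : ℝ} (hσ : 0 < σ) :
    gConv σ μ = (gaussianExpTail μ σ + gaussianExpTail (-μ) σ) / 2 := by
  have hv : (σ ^ 2).toNNReal ≠ 0 := by simpa using hσ.ne'
  have hint : Integrable fun z => gaussianPDFReal μ (σ ^ 2).toNNReal z • exp (-|z|) :=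
    (integrable_gaussianPDFReal _ _).mul_bdd (c := 1) (by fun_prop) (ae_of_all _ fun z => by simp)
  rw [gConv, integral_gaussianReal_eq_integral_smul hv,
    integral_eq_integral_Ioi_add_integral_Ioi_comp_neg hint]
  have hright : ∫ z in Ioi 0, gaussianPDFReal μ (σ ^ 2).toNNReal z • exp (-|z|) =
      gaussianExpTail (-μ) σ / 2 := by
    rw [← integral_Ioi_gaussianPDFReal_mul_exp_neg μ hσ]
    refine setIntegral_congr_fun measurableSet_Ioi fun z (hz : 0 < z) => ?_
    rw [smul_eq_mul, abs_of_pos hz]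
  have hleft : ∫ z in Ioi 0, gaussianPDFReal μ (σ ^ 2).toNNReal (-z) • exp (-|-z|) =
      gaussianExpTail μ σ / 2 := by
    have := integral_Ioi_gaussianPDFReal_mul_exp_neg (-μ) hσ
    rw [neg_neg] at this
    rw [← this]
    refine setIntegral_congr_fun measurableSet_Ioi fun z (hz : 0 < z) => ?_
    rw [smul_eq_mul, abs_neg, abs_of_pos hz, gaussianPDFReal_neg]
  rw [hright, hleft]
  ring

theorem hasDerivAt_gaussianExpTail (c : ℝ) {σ : ℝ} (hσ : σ ≠ 0) :
    HasDerivAt (gaussianExpTail c)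
      (σ * gaussianExpTail c σ - √(2 / π) * (1 - c / σ ^ 2) * exp (-c ^ 2 / (2 * σ ^ 2)))
      σ := by
  have h2 : √2 ^ 2 = 2 := sq_sqrt (by norm_num)
  have harg : HasDerivAt (fun s => s / √2 + c / (√2 * s)) ((1 - c / σ ^ 2) / √2) σ := by
    have := ((hasDerivAt_id σ).div_const √2).add ((hasDerivAt_inv hσ).const_mul (c / √2))
    refine (this.congr_deriv (by ring)).congr_of_eventuallyEq
      (Filter.Eventually.of_forall fun s => ?_)
    simp only [Pi.add_apply, id]
    ring
  have hexp : HasDerivAt (fun s => exp (s ^ 2 / 2 + c)) (exp (σ ^ 2 / 2 + c) * σ) σ := by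
    convert (((hasDerivAt_pow 2 σ).div_const 2).add_const c).exp using 1
    ring
  have hgauss : exp (σ ^ 2 / 2 + c) * exp (-(σ / √2 + c / (√2 * σ)) ^ 2) =
      exp (-c ^ 2 / (2 * σ ^ 2)) := by
    rw [← exp_add]
    congr 1
    field_simp
    rw [h2]
    ring
  refine (hexp.mul ((hasDerivAt_erfc _).comp σ harg)).congr_deriv ?_
  rw [gaussianExpTail, ← hgauss, sqrt_div' 2 pi_pos.le, Function.comp_apply]
  generalize exp (-(σ / √2 + c / (√2 * σ)) ^ 2) = E
  field_simp
  linear_combination E * (σ ^ 2 - c) * h2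

/-- Closed form for `q_σ(μ) = ∂g_σ(μ)/∂σ`:
`q_σ(μ) = (1/2) exp(σ²/2) σ [exp(μ) erfc(σ/√2 + μ/(√2σ)) + exp(−μ) erfc(σ/√2 − μ/(√2σ))]
  − √(2/π) exp(−μ²/(2σ²))`. -/
theorem deriv_gaussian_smoothed_loss (σ μ : ℝ) (hσ : 0 < σ) :
    HasDerivAt (fun s => gConv s μ)
      ((1 / 2) * Real.exp (σ ^ 2 / 2) * σ *
          (Real.exp μ * erfc (σ / Real.sqrt 2 + μ / (Real.sqrt 2 * σ)) +
            Real.exp (-μ) * erfc (σ / Real.sqrt 2 - μ / (Real.sqrt 2 * σ))) -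
        Real.sqrt (2 / π) * Real.exp (-μ ^ 2 / (2 * σ ^ 2))) σ := by
  have hconv : (fun s => gConv s μ) =ᶠ[𝓝 σ]
      fun s => (gaussianExpTail μ s + gaussianExpTail (-μ) s) / 2 :=
    Filter.eventually_of_mem (Ioi_mem_nhds hσ) fun s hs => gConv_eq_gaussianExpTail μ hs
  have hderiv := ((hasDerivAt_gaussianExpTail μ hσ.ne').add
    (hasDerivAt_gaussianExpTail (-μ) hσ.ne')).div_const 2
  refine (hderiv.congr_of_eventuallyEq hconv).congr_deriv ?_
  simp only [gaussianExpTail, exp_add, exp_sub, exp_neg, neg_div, ← sub_eq_add_neg, neg_sq]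
  ring
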